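/- For every real c ≥ 0 and every integer τ ≥ 1, the cumulative bonus β̃_τ = Σ_{i=1}^{τ} α_τ^i · (c/√i) satisfies c/√τ ≤ β̃_τ ≤ 2c/√τ. -/

import Mathlib

/-!
The weights `α_τ^i` (`1 ≤ i ≤ τ`) are nonnegative and sum to `1`, because the weighted averages
`S_τ = ∑ α_τ^i g(i)` satisfy `S_{τ+1} = (1 - α_{τ+1}) S_τ + α_{τ+1} g(τ+1)` and `α_1 = 1`.
The lower bound is then immediate since `c/√i ≥ c/√τ`. For the upper bound, induction on `τ` via
this recursion reduces `S_τ ≤ 2/√τ` for `g(i) = 1/√i` to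
`(1 - α_{n+1}) 2/√n + α_{n+1}/√(n+1) ≤ 2/√(n+1)`, which after clearing denominators is
`2 √n √(n+1) ≤ H + 2n + 1`, true by AM-GM.
-/

open Finset

/-- The learning rate `α_τ = (H+1)/(H+τ)`. -/
noncomputable def lr (H : ℝ) (τ : ℕ) : ℝ := (H + 1) / (H + τ)

/-- The coefficients `α_τ^i`. -/
noncomputable def acoef (H : ℝ) (τ i : ℕ) : ℝ :=
  if i = 0 then ∏ j ∈ Finset.Icc 1 τ, (1 - lr H j)
  else lr H i * ∏ j ∈ Finset.Icc (i + 1) τ, (1 - lr H j)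

open Real

variable {H : ℝ}

lemma lr_nonneg (hH : 0 ≤ H) (i : ℕ) : 0 ≤ lr H i := by
  unfold lr; positivity

lemma lr_le_one (hH : 0 ≤ H) {i : ℕ} (hi : 1 ≤ i) : lr H i ≤ 1 := by
  have hi' : (1 : ℝ) ≤ i := by exact_mod_cast hi
  exact div_le_one_of_le₀ (by linarith) (by linarith)

lemma lr_one (hH : 0 ≤ H) : lr H 1 = 1 := by
  rw [lr, Nat.cast_one, div_self (by linarith)]

lemma acoef_nonneg (hH : 0 ≤ H) (τ : ℕ) {i : ℕ} (hi : 1 ≤ i) : 0 ≤ acoef H τ i := by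
  rw [acoef, if_neg (by omega)]
  refine mul_nonneg (lr_nonneg hH i) (prod_nonneg fun j hj => ?_)
  linarith [lr_le_one hH (i := j) (by grind)]

lemma acoef_self (τ : ℕ) : acoef H (τ + 1) (τ + 1) = lr H (τ + 1) := by
  rw [acoef, if_neg (by omega), Icc_eq_empty (by omega), prod_empty, mul_one]

lemma acoef_succ {τ i : ℕ} (hi : i ≠ 0) (hiτ : i ≤ τ) :
    acoef H (τ + 1) i = (1 - lr H (τ + 1)) * acoef H τ i := by
  rw [acoef, acoef, if_neg hi, if_neg hi, ← insert_Icc_right_eq_Icc_add_one (by omega),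
    prod_insert (by simp)]
  ring

lemma sum_acoef_mul_succ (g : ℕ → ℝ) (τ : ℕ) :
    ∑ i ∈ Icc 1 (τ + 1), acoef H (τ + 1) i * g i
      = (1 - lr H (τ + 1)) * ∑ i ∈ Icc 1 τ, acoef H τ i * g i + lr H (τ + 1) * g (τ + 1) := by
  rw [← insert_Icc_right_eq_Icc_add_one (by omega), sum_insert (by simp), acoef_self, add_comm,
    mul_sum]
  congr 1
  refine sum_congr rfl fun i hi => ?_
  rw [acoef_succ (by grind) (by grind), mul_assoc]

lemma sum_acoef_eq_one (hH : 0 ≤ H) {τ : ℕ} (hτ : 1 ≤ τ) : ∑ i ∈ Icc 1 τ, acoef H τ i = 1 := by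
  induction τ, hτ using Nat.le_induction with
  | base => simp [acoef, lr_one hH]
  | succ n _ ih => simpa [ih] using sum_acoef_mul_succ (H := H) (fun _ => 1) n

lemma le_sum_acoef_mul (hH : 0 ≤ H) {τ : ℕ} (hτ : 1 ≤ τ) {g : ℕ → ℝ} {a : ℝ}
    (hg : ∀ i ∈ Icc 1 τ, a ≤ g i) : a ≤ ∑ i ∈ Icc 1 τ, acoef H τ i * g i :=
  calc a = ∑ i ∈ Icc 1 τ, acoef H τ i * a := by rw [← sum_mul, sum_acoef_eq_one hH hτ, one_mul]
    _ ≤ ∑ i ∈ Icc 1 τ, acoef H τ i * g i := sum_le_sum fun i hi =>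
      mul_le_mul_of_nonneg_left (hg i hi) (acoef_nonneg hH τ (mem_Icc.1 hi).1)

lemma one_sub_lr_mul_add_lr_div_sqrt_le (hH : 0 ≤ H) {n : ℕ} (hn : 1 ≤ n) :
    (1 - lr H (n + 1)) * (2 / √n) + lr H (n + 1) / √(n + 1 : ℕ) ≤ 2 / √(n + 1 : ℕ) := by
  have hn' : (1 : ℝ) ≤ n := by exact_mod_cast hn
  set s := √n
  set t := √(n + 1 : ℕ)
  have hs : 0 < s := sqrt_pos.2 (by linarith)
  have ht : 0 < t := sqrt_pos.2 (by positivity)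
  have hs2 : s ^ 2 = n := sq_sqrt (by linarith)
  have ht2 : t ^ 2 = n + 1 := by rw [sq_sqrt (by positivity)]; push_cast; ring
  have hst : 2 * s * t ≤ 2 * n + 1 := by nlinarith [sq_nonneg (t - s)]
  have hD : 0 < H + n + 1 := by linarith
  have key : 2 / t - ((1 - lr H (n + 1)) * (2 / s) + lr H (n + 1) / t)
      = (H + 2 * n + 1 - 2 * s * t) / ((H + n + 1) * t) := by
    rw [lr, Nat.cast_succ, ← add_assoc]
    field_simp
    rw [← hs2]
    ring
  rw [← sub_nonneg, key]
  exact div_nonneg (by linarith) (by positivity)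

lemma sum_acoef_div_sqrt_le (hH : 0 ≤ H) (τ : ℕ) :
    ∑ i ∈ Icc 1 τ, acoef H τ i / √i ≤ 2 / √τ := by
  simp_rw [div_eq_mul_one_div (acoef H τ _)]
  induction τ with
  | zero => simp
  | succ n ih =>
    rw [sum_acoef_mul_succ]
    rcases Nat.eq_zero_or_pos n with rfl | hn
    · norm_num [lr_one hH]
    calc (1 - lr H (n + 1)) * ∑ i ∈ Icc 1 n, acoef H n i * (1 / √i)
          + lr H (n + 1) * (1 / √(n + 1 : ℕ))
        ≤ (1 - lr H (n + 1)) * (2 / √n) + lr H (n + 1) / √(n + 1 : ℕ) := by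
          rw [mul_one_div]
          gcongr
          linarith [lr_le_one hH (Nat.le_add_left 1 n)]
      _ ≤ 2 / √(n + 1 : ℕ) := one_sub_lr_mul_add_lr_div_sqrt_le hH hn

theorem stmt_15 (H : ℝ) (hH : 1 ≤ H) (c : ℝ) (hc : 0 ≤ c) (τ : ℕ) (hτ : 1 ≤ τ) :
    c / Real.sqrt τ ≤ ∑ i ∈ Finset.Icc 1 τ, acoef H τ i * (c / Real.sqrt i) ∧
    ∑ i ∈ Finset.Icc 1 τ, acoef H τ i * (c / Real.sqrt i) ≤ 2 * c / Real.sqrt τ := by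
  have hH₀ : 0 ≤ H := zero_le_one.trans hH
  constructor
  · refine le_sum_acoef_mul hH₀ hτ fun i hi => ?_
    have hi₁ : (1 : ℝ) ≤ i := by exact_mod_cast (mem_Icc.1 hi).1
    exact div_le_div_of_nonneg_left hc (sqrt_pos.2 (by linarith))
      (sqrt_le_sqrt (by exact_mod_cast (mem_Icc.1 hi).2))
  · calc ∑ i ∈ Icc 1 τ, acoef H τ i * (c / √i) = c * ∑ i ∈ Icc 1 τ, acoef H τ i / √i := by
          rw [mul_sum]
          exact sum_congr rfl fun i _ => by ring
      _ ≤ c * (2 / √τ) := mul_le_mul_of_nonneg_left (sum_acoef_div_sqrt_le hH₀ τ) hc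
      _ = 2 * c / √τ := by ring
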